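/- arXiv:1506.04694 — 2 statements merged into one kernel-verified Lean document; each statement's English description precedes it below -/
import Mathlib

section
/- Under assumptions M1 (|E[Q_ℓ − Q]| ≤ C_α h_ℓ^α), M2 (V[Q_ℓ − Q_{ℓ−1}] ≤ C_β h_ℓ^β) and geometric mesh refinement h_ℓ = s^{−ℓ} h_0 with s ≥ 2, if the number of samples is chosen as N_ℓ ≥ 2(L+1) C_β h_ℓ^β / ε², and L is chosen large enough that C_α h_L^α ≤ ε/√2, then the mean square error of the multilevel Monte Carlo estimator satisfies MSE ≤ ε². -/
/-!
The mean square error splits into the statistical error `∑ V[Y_ℓ] / N_ℓ` and the squared bias.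
The sample-size rule makes each of the `L + 1` variance terms at most `ε² / (2(L + 1))`, so the
statistical error is at most `ε² / 2`; the choice of `L` bounds the bias by `ε / √2`, so the squared
bias is at most `ε² / 2` as well.
-/

open MeasureTheory ProbabilityTheory Finset

lemma div_le_sq_div_of_mul_div_sq_le {V B N ε k : ℝ} (hε : 0 < ε) (hk : 0 < k) (hN₀ : 0 ≤ N)
    (hV : V ≤ B) (hN : k * B / ε ^ 2 ≤ N) : V / N ≤ ε ^ 2 / k := by
  refine div_le_of_le_mul₀ hN₀ (by positivity) ?_
  calc V ≤ B := hV
    _ = ε ^ 2 / k * (k * B / ε ^ 2) := by field_simp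
    _ ≤ ε ^ 2 / k * N := by gcongr

lemma sum_range_le_of_le_div {f : ℕ → ℝ} {n : ℕ} {c : ℝ} (hn : 0 < n)
    (hf : ∀ ℓ < n, f ℓ ≤ c / n) : ∑ ℓ ∈ range n, f ℓ ≤ c := by
  calc ∑ ℓ ∈ range n, f ℓ ≤ #(range n) • (c / n) :=
        sum_le_card_nsmul _ _ _ fun ℓ hℓ => hf ℓ (mem_range.mp hℓ)
    _ = c := by
        rw [card_range, nsmul_eq_mul]
        field_simp

lemma sq_le_half_sq_of_abs_le_div_sqrt_two {b ε : ℝ} (hb : |b| ≤ ε / √2) : b ^ 2 ≤ ε ^ 2 / 2 := by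
  calc b ^ 2 ≤ (ε / √2) ^ 2 := sq_le_sq.mpr (hb.trans (le_abs_self _))
    _ = ε ^ 2 / 2 := by rw [div_pow, Real.sq_sqrt zero_le_two]

theorem mlmc_mse_bound_general
    {Ω : Type*} [MeasurableSpace Ω] (μ : Measure Ω)
    (Q : Ω → ℝ)
    (Qlev : ℕ → Ω → ℝ)
    (α β C_α C_β : ℝ)
    -- mesh widths
    (h : ℕ → ℝ)
    -- M1 and M2
    (hM1 : ∀ ℓ, |(∫ ω, Qlev ℓ ω ∂μ) - ∫ ω, Q ω ∂μ| ≤ C_α * h ℓ ^ α)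
    (hM2 : ∀ ℓ, variance
      (fun ω => Qlev ℓ ω - (if ℓ = 0 then 0 else Qlev (ℓ - 1) ω)) μ ≤ C_β * h ℓ ^ β)
    (ε : ℝ) (hε : 0 < ε)
    (L : ℕ) (hL : C_α * h L ^ α ≤ ε / Real.sqrt 2)
    (N : ℕ → ℕ)
    (hN : ∀ ℓ ≤ L, (2 * (L + 1 : ℝ) * C_β * h ℓ ^ β / ε ^ 2) ≤ (N ℓ : ℝ)) :
    (∑ ℓ ∈ Finset.range (L + 1),
        variance (fun ω => Qlev ℓ ω - (if ℓ = 0 then 0 else Qlev (ℓ - 1) ω)) μ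
          / (N ℓ : ℝ))
      + ((∫ ω, Qlev L ω ∂μ) - ∫ ω, Q ω ∂μ) ^ 2 ≤ ε ^ 2 := by
  have hstat : (∑ ℓ ∈ range (L + 1),
      variance (fun ω => Qlev ℓ ω - (if ℓ = 0 then 0 else Qlev (ℓ - 1) ω)) μ / (N ℓ : ℝ))
        ≤ ε ^ 2 / 2 := by
    refine sum_range_le_of_le_div L.succ_pos fun ℓ hℓ => ?_
    rw [div_div, Nat.cast_succ]
    exact div_le_sq_div_of_mul_div_sq_le hε (by positivity) (Nat.cast_nonneg _) (hM2 ℓ)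
      (by simpa only [mul_assoc] using hN ℓ (Nat.lt_succ_iff.mp hℓ))
  have hbias := sq_le_half_sq_of_abs_le_div_sqrt_two ((hM1 L).trans hL)
  linarith

theorem mlmc_mse_bound
    {Ω : Type*} [MeasurableSpace Ω] (μ : Measure Ω) [IsProbabilityMeasure μ]
    (Q : Ω → ℝ) (hQ : MemLp Q 2 μ)
    (Qlev : ℕ → Ω → ℝ) (hQlev : ∀ ℓ, MemLp (Qlev ℓ) 2 μ)
    (s : ℕ) (hsgrow : 2 ≤ s) (h0 : ℝ) (hh0 : 0 < h0)
    (α β C_α C_β : ℝ) (hα : 0 < α) (hβ : 0 < β) (hCα : 0 < C_α) (hCβ : 0 < C_β)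
    -- mesh widths
    (h : ℕ → ℝ) (hmesh : ∀ ℓ, h ℓ = h0 / (s : ℝ) ^ ℓ)
    -- M1 and M2
    (hM1 : ∀ ℓ, |(∫ ω, Qlev ℓ ω ∂μ) - ∫ ω, Q ω ∂μ| ≤ C_α * h ℓ ^ α)
    (hM2 : ∀ ℓ, variance
      (fun ω => Qlev ℓ ω - (if ℓ = 0 then 0 else Qlev (ℓ - 1) ω)) μ ≤ C_β * h ℓ ^ β)
    (ε : ℝ) (hε : 0 < ε)
    (L : ℕ) (hL : C_α * h L ^ α ≤ ε / Real.sqrt 2)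
    (N : ℕ → ℕ)
    (hN : ∀ ℓ ≤ L, (2 * (L + 1 : ℝ) * C_β * h ℓ ^ β / ε ^ 2) ≤ (N ℓ : ℝ)) :
    (∑ ℓ ∈ Finset.range (L + 1),
        variance (fun ω => Qlev ℓ ω - (if ℓ = 0 then 0 else Qlev (ℓ - 1) ω)) μ
          / (N ℓ : ℝ))
      + ((∫ ω, Qlev L ω ∂μ) - ∫ ω, Q ω ∂μ) ^ 2 ≤ ε ^ 2 :=
  mlmc_mse_bound_general μ Q Qlev α β C_α C_β h hM1 hM2 ε hε L hL N hN
end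

section
/- If Y_ℓ are real random variables with V[Y_ℓ] ≤ C_β h_ℓ^β where h_ℓ = 2^{−ℓ} h_0, and the per-sample cost satisfies C_ℓ ≤ C_γ h_ℓ^{−γ} with β > γ > 0, then for sample sizes N_ℓ proportional to √(V[Y_ℓ]/C_ℓ) the total cost Σ_{ℓ=0}^{L} N_ℓ C_ℓ needed to achieve Σ_ℓ V[Y_ℓ]/N_ℓ ≤ ε²/2 is bounded by a constant times ε^{−2}, uniformly in L. -/
open Finset

/-!
With `S = ∑ⱼ √(aⱼ bⱼ)`, where `aⱼ = C_β h_j^β` bounds the variance and `bⱼ = C_γ h_j^(-γ)` the cost,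
the sample size `N_ℓ ≥ (2/ε²) √(a_ℓ/b_ℓ) S` gives `a_ℓ / N_ℓ ≤ (ε²/2) √(a_ℓ b_ℓ) / S`, which sums to
`ε²/2`, while rounding up costs at most one extra sample per level, so
`N_ℓ b_ℓ ≤ (2/ε²) S √(a_ℓ b_ℓ) + b_ℓ` and the total cost is at most `(2/ε²) S² + ∑ b_ℓ`.
Finally `√(aⱼ bⱼ)` is a multiple of `h_j^((β-γ)/2)`, which decays geometrically because `β > γ`,
so `S` is bounded independently of `L`.
-/

lemma Real.sqrt_div_mul_sqrt_mul {a b : ℝ} (ha : 0 ≤ a) (hb : 0 < b) :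
    √(a / b) * √(a * b) = a := by
  rw [← Real.sqrt_mul (by positivity), show a / b * (a * b) = a ^ 2 by field_simp]
  exact Real.sqrt_sq ha

lemma Real.sqrt_div_mul_self (a : ℝ) {b : ℝ} (hb : 0 < b) : √(a / b) * b = √(a * b) := by
  rw [show a * b = a / b * b ^ 2 by field_simp, Real.sqrt_mul' _ (sq_nonneg b),
    Real.sqrt_sq hb.le]

section SampleAllocation

variable {ι : Type*} (s : Finset ι) (a b : ι → ℝ) (ε : ℝ)

/-- The sample size `N_ℓ` before rounding up, for variance bounds `a` and cost bounds `b`. -/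
noncomputable def mlmcSampleSize (ℓ : ι) : ℝ :=
  2 / ε ^ 2 * √(a ℓ / b ℓ) * ∑ j ∈ s, √(a j * b j)

variable {s a b ε}

lemma mlmcSampleSize_nonneg (ℓ : ι) : 0 ≤ mlmcSampleSize s a b ε ℓ := by
  unfold mlmcSampleSize; positivity

lemma mlmcSampleSize_mul {ℓ : ι} (hb : 0 < b ℓ) :
    mlmcSampleSize s a b ε ℓ * b ℓ = 2 / ε ^ 2 * (∑ j ∈ s, √(a j * b j)) * √(a ℓ * b ℓ) := by
  rw [mlmcSampleSize, ← Real.sqrt_div_mul_self (a ℓ) hb]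
  ring

lemma sum_sqrt_mul_pos {ℓ : ι} (hℓ : ℓ ∈ s) (ha : 0 < a ℓ) (hb : 0 < b ℓ) :
    0 < ∑ j ∈ s, √(a j * b j) :=
  (Real.sqrt_pos.2 (mul_pos ha hb)).trans_le
    (single_le_sum (f := fun j ↦ √(a j * b j)) (fun _ _ ↦ Real.sqrt_nonneg _) hℓ)

lemma mlmcSampleSize_pos {ℓ : ι} (hℓ : ℓ ∈ s) (ha : 0 < a ℓ) (hb : 0 < b ℓ) (hε : 0 < ε) :
    0 < mlmcSampleSize s a b ε ℓ := by
  have := sum_sqrt_mul_pos hℓ ha hb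
  have := Real.sqrt_pos.2 (div_pos ha hb)
  unfold mlmcSampleSize
  positivity

lemma div_mlmcSampleSize {ℓ : ι} (hℓ : ℓ ∈ s) (ha : 0 < a ℓ) (hb : 0 < b ℓ) (hε : 0 < ε) :
    a ℓ / mlmcSampleSize s a b ε ℓ = ε ^ 2 / 2 * (√(a ℓ * b ℓ) / ∑ j ∈ s, √(a j * b j)) := by
  have := sum_sqrt_mul_pos hℓ ha hb
  have := Real.sqrt_pos.2 (div_pos ha hb)
  rw [mlmcSampleSize]
  field_simp
  linear_combination -Real.sqrt_div_mul_sqrt_mul ha.le hb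

lemma sum_div_le_of_mlmcSampleSize_le (ha : ∀ ℓ ∈ s, 0 < a ℓ) (hb : ∀ ℓ ∈ s, 0 < b ℓ)
    (hε : 0 < ε) {N : ι → ℝ} (hN : ∀ ℓ ∈ s, mlmcSampleSize s a b ε ℓ ≤ N ℓ) :
    ∑ ℓ ∈ s, a ℓ / N ℓ ≤ ε ^ 2 / 2 := by
  calc ∑ ℓ ∈ s, a ℓ / N ℓ
      ≤ ∑ ℓ ∈ s, ε ^ 2 / 2 * (√(a ℓ * b ℓ) / ∑ j ∈ s, √(a j * b j)) := by
        refine sum_le_sum fun ℓ hℓ ↦ ?_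
        rw [← div_mlmcSampleSize hℓ (ha ℓ hℓ) (hb ℓ hℓ) hε]
        exact div_le_div_of_nonneg_left (ha ℓ hℓ).le
          (mlmcSampleSize_pos hℓ (ha ℓ hℓ) (hb ℓ hℓ) hε) (hN ℓ hℓ)
    _ = ε ^ 2 / 2 * ((∑ j ∈ s, √(a j * b j)) / ∑ j ∈ s, √(a j * b j)) := by
        rw [← mul_sum, ← sum_div]
    _ ≤ ε ^ 2 / 2 := mul_le_of_le_one_right (by positivity) (div_self_le_one _)

lemma sum_mul_le_of_le_mlmcSampleSize_add_one (hb : ∀ ℓ ∈ s, 0 < b ℓ) {N : ι → ℝ}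
    (hN : ∀ ℓ ∈ s, N ℓ ≤ mlmcSampleSize s a b ε ℓ + 1) :
    ∑ ℓ ∈ s, N ℓ * b ℓ ≤ 2 / ε ^ 2 * (∑ j ∈ s, √(a j * b j)) ^ 2 + ∑ ℓ ∈ s, b ℓ := by
  calc ∑ ℓ ∈ s, N ℓ * b ℓ
      ≤ ∑ ℓ ∈ s, (2 / ε ^ 2 * (∑ j ∈ s, √(a j * b j)) * √(a ℓ * b ℓ) + b ℓ) := by
        refine sum_le_sum fun ℓ hℓ ↦ ?_
        rw [← mlmcSampleSize_mul (hb ℓ hℓ), ← add_one_mul]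
        exact mul_le_mul_of_nonneg_right (hN ℓ hℓ) (hb ℓ hℓ).le
    _ = 2 / ε ^ 2 * (∑ j ∈ s, √(a j * b j)) ^ 2 + ∑ ℓ ∈ s, b ℓ := by
        rw [sum_add_distrib, ← mul_sum]
        ring

end SampleAllocation

lemma sum_range_dyadic_rpow_le {h₀ δ : ℝ} (hh₀ : 0 < h₀) (hδ : 0 < δ) (n : ℕ) :
    ∑ j ∈ range n, (h₀ * (2 : ℝ) ^ (-(j : ℝ))) ^ δ ≤ h₀ ^ δ / (1 - (2 : ℝ) ^ (-δ)) := by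
  have hterm (j : ℕ) : (h₀ * (2 : ℝ) ^ (-(j : ℝ))) ^ δ = h₀ ^ δ * ((2 : ℝ) ^ (-δ)) ^ j := by
    rw [Real.mul_rpow hh₀.le (by positivity), ← Real.rpow_mul zero_le_two, ← Real.rpow_natCast,
      ← Real.rpow_mul zero_le_two]
    ring_nf
  have hgeom := geom_sum_Ico_le_of_lt_one (m := 0) (n := n) (Real.rpow_nonneg zero_le_two (-δ))
    (Real.rpow_lt_one_of_one_lt_of_neg one_lt_two (neg_neg_of_pos hδ))
  rw [← range_eq_Ico, pow_zero] at hgeom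
  rw [sum_congr rfl fun j _ ↦ hterm j, ← mul_sum, ← mul_one_div]
  exact mul_le_mul_of_nonneg_left hgeom (by positivity)

lemma sqrt_mul_rpow_mul_mul_rpow_neg (Cβ Cγ β γ : ℝ) {x : ℝ} (hx : 0 < x) :
    √(Cβ * x ^ β * (Cγ * x ^ (-γ))) = √(Cβ * Cγ) * x ^ ((β - γ) / 2) := by
  rw [show Cβ * x ^ β * (Cγ * x ^ (-γ)) = Cβ * Cγ * x ^ (β - γ) by
      rw [sub_eq_add_neg, Real.rpow_add hx]; ring,
    Real.sqrt_mul' _ (by positivity), Real.sqrt_eq_rpow (x ^ _), ← Real.rpow_mul hx.le]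
  ring_nf

theorem mlmc_cost_bound_general
    (h0 : ℝ) (hh0 : 0 < h0)
    (β γ C_β C_γ : ℝ) (hβγ : γ < β) (hCβ : 0 < C_β) (hCγ : 0 < C_γ)
    (h : ℕ → ℝ) (hmesh : ∀ ℓ, h ℓ = h0 * (2 : ℝ) ^ (-(ℓ : ℝ))) :
    ∃ C : ℝ, 0 < C ∧ ∀ (L : ℕ) (ε : ℝ), 0 < ε →
      ∀ N : ℕ → ℕ,
        (∀ ℓ ≤ L, N ℓ =
          ⌈(2 / ε ^ 2) * Real.sqrt (C_β * h ℓ ^ β / (C_γ * h ℓ ^ (-γ))) *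
            ∑ j ∈ range (L + 1),
              Real.sqrt (C_β * h j ^ β * (C_γ * h j ^ (-γ)))⌉₊) →
        (∑ ℓ ∈ range (L + 1), C_β * h ℓ ^ β / (N ℓ : ℝ)) ≤ ε ^ 2 / 2 ∧
        (∑ ℓ ∈ range (L + 1), (N ℓ : ℝ) * (C_γ * h ℓ ^ (-γ))) ≤
          C * ε ^ (-2 : ℝ) + ∑ ℓ ∈ range (L + 1), C_γ * h ℓ ^ (-γ) := by
  have hh (ℓ : ℕ) : 0 < h ℓ := by rw [hmesh]; positivity
  have hδ : 0 < (β - γ) / 2 := by linarith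
  have hr : 0 < 1 - (2 : ℝ) ^ (-((β - γ) / 2)) :=
    sub_pos.2 (Real.rpow_lt_one_of_one_lt_of_neg one_lt_two (neg_neg_of_pos hδ))
  set M := √(C_β * C_γ) * (h0 ^ ((β - γ) / 2) / (1 - (2 : ℝ) ^ (-((β - γ) / 2))))
  have hM : 0 < M := by have := mul_pos hCβ hCγ; positivity
  refine ⟨2 * M ^ 2, by positivity, fun L ε hε N hN ↦ ?_⟩
  set a : ℕ → ℝ := fun ℓ ↦ C_β * h ℓ ^ β
  set b : ℕ → ℝ := fun ℓ ↦ C_γ * h ℓ ^ (-γ)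
  have ha (ℓ : ℕ) (_ : ℓ ∈ range (L + 1)) : 0 < a ℓ := by have := hh ℓ; positivity
  have hb (ℓ : ℕ) (_ : ℓ ∈ range (L + 1)) : 0 < b ℓ := by have := hh ℓ; positivity
  have hN' (ℓ : ℕ) (hℓ : ℓ ∈ range (L + 1)) :
      N ℓ = ⌈mlmcSampleSize (range (L + 1)) a b ε ℓ⌉₊ :=
    hN ℓ (Nat.lt_succ_iff.1 (mem_range.1 hℓ))
  have hS : ∑ j ∈ range (L + 1), √(a j * b j) ≤ M := by
    calc ∑ j ∈ range (L + 1), √(a j * b j)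
        = √(C_β * C_γ) * ∑ j ∈ range (L + 1), (h0 * (2 : ℝ) ^ (-(j : ℝ))) ^ ((β - γ) / 2) := by
          rw [mul_sum]
          refine sum_congr rfl fun j _ ↦ ?_
          rw [← hmesh]
          exact sqrt_mul_rpow_mul_mul_rpow_neg C_β C_γ β γ (hh j)
      _ ≤ M := mul_le_mul_of_nonneg_left (sum_range_dyadic_rpow_le hh0 hδ _) (Real.sqrt_nonneg _)
  refine ⟨sum_div_le_of_mlmcSampleSize_le ha hb hε fun ℓ hℓ ↦ ?_, ?_⟩
  · rw [hN' ℓ hℓ]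
    exact Nat.le_ceil _
  calc ∑ ℓ ∈ range (L + 1), (N ℓ : ℝ) * b ℓ
      ≤ 2 / ε ^ 2 * (∑ j ∈ range (L + 1), √(a j * b j)) ^ 2 + ∑ ℓ ∈ range (L + 1), b ℓ :=
        sum_mul_le_of_le_mlmcSampleSize_add_one hb fun ℓ hℓ ↦ by
          rw [hN' ℓ hℓ]
          exact (Nat.ceil_lt_add_one (mlmcSampleSize_nonneg ℓ)).le
    _ ≤ 2 * M ^ 2 * ε ^ (-2 : ℝ) + ∑ ℓ ∈ range (L + 1), b ℓ := by
        rw [Real.rpow_neg hε.le, Real.rpow_two, ← div_eq_mul_inv, mul_div_right_comm]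
        gcongr

theorem mlmc_cost_bound
    (h0 : ℝ) (hh0 : 0 < h0)
    (β γ C_β C_γ : ℝ) (hγ : 0 < γ) (hβγ : γ < β) (hCβ : 0 < C_β) (hCγ : 0 < C_γ)
    (h : ℕ → ℝ) (hmesh : ∀ ℓ, h ℓ = h0 * (2 : ℝ) ^ (-(ℓ : ℝ)))
    (v c : ℕ → ℝ) (hv0 : ∀ ℓ, 0 ≤ v ℓ) (hv : ∀ ℓ, v ℓ ≤ C_β * h ℓ ^ β)
    (hc0 : ∀ ℓ, 0 ≤ c ℓ) (hc : ∀ ℓ, c ℓ ≤ C_γ * h ℓ ^ (-γ)) :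
    ∃ C : ℝ, 0 < C ∧ ∀ (L : ℕ) (ε : ℝ), 0 < ε →
      ∀ N : ℕ → ℕ,
        (∀ ℓ ≤ L, N ℓ =
          ⌈(2 / ε ^ 2) * Real.sqrt (C_β * h ℓ ^ β / (C_γ * h ℓ ^ (-γ))) *
            ∑ j ∈ range (L + 1),
              Real.sqrt (C_β * h j ^ β * (C_γ * h j ^ (-γ)))⌉₊) →
        (∑ ℓ ∈ range (L + 1), C_β * h ℓ ^ β / (N ℓ : ℝ)) ≤ ε ^ 2 / 2 ∧
        (∑ ℓ ∈ range (L + 1), (N ℓ : ℝ) * (C_γ * h ℓ ^ (-γ))) ≤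
          C * ε ^ (-2 : ℝ) + ∑ ℓ ∈ range (L + 1), C_γ * h ℓ ^ (-γ) :=
  mlmc_cost_bound_general h0 hh0 β γ C_β C_γ hβγ hCβ hCγ h hmesh
end
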